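/- arXiv:1710.05601 — 2 statements merged into one kernel-verified Lean document; each statement's English description precedes it below -/
import Mathlib

section
/- For formal power series: given β(g) = β₂g² + β₃g³ + O(g⁴) with β₂ ≠ 0, there exists a formal diffeomorphism φ(g) = g + O(g²) such that the pushed-forward series β̂ = φ_*β satisfies β̂(g) = β₂g² + β₃g³, i.e. β̂_r = 0 for all r ≥ 4. -/
/-!
Write `φ = g + ∑_{m ≥ 2} c_m g^m`. In `β̂(φ) = φ' β` with `β̂ = β₂ g² + β₃ g³`, the coefficient
`c_m` enters the equation at order `g^(m+1)` only through `2 β₂ c_m` (from `β₂ φ²`) and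
`m β₂ c_m` (from `φ' β`); everything else at that order depends on `c_k` with `k < m`. Since
`β₂ ≠ 0`, the equation `(m - 2) β₂ c_m = …` determines `c_m` for every `m ≥ 3`, while for `m = 2`
the order-`g³` equation holds identically whatever `c_2` is, which is why `β₃` survives. The
polynomial approximations obtained this way converge `X`-adically to the solution.
-/

open scoped BigOperators

namespace BetaNormalForm

/-- Composition (substitution) of formal power series: `(f ∘ g)(z) = f(g(z))`, which is
well defined coefficientwise when `g` has vanishing constant term (then
`coeff n (g^k) = 0` for `k > n`, so each coefficient is the finite sum below). -/
noncomputable def comp (f g : PowerSeries ℝ) : PowerSeries ℝ :=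
  PowerSeries.mk fun n =>
    ∑ k ∈ Finset.range (n + 1), PowerSeries.coeff k f * PowerSeries.coeff n (g ^ k)

open PowerSeries

section CommRing

variable {R : Type*} [CommRing R]

theorem X_pow_dvd_derivative {n : ℕ} {f : R⟦X⟧} (h : X ^ (n + 1) ∣ f) :
    X ^ n ∣ d⁄dX R f := by
  rw [X_pow_dvd_iff] at h ⊢
  intro k hk
  rw [coeff_derivative, h (k + 1) (by omega), zero_mul]

theorem X_pow_dvd_sub_of_le {s : ℕ → R⟦X⟧} (hs : ∀ n, X ^ n ∣ s (n + 1) - s n)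
    {n m : ℕ} (hnm : n ≤ m) : X ^ n ∣ s m - s n := by
  induction m, hnm using Nat.le_induction with
  | base => simp
  | succ m hnm ih =>
    rw [← sub_add_sub_cancel]
    exact dvd_add ((pow_dvd_pow X hnm).trans (hs m)) ih

theorem exists_X_pow_dvd_sub {s : ℕ → R⟦X⟧} (hs : ∀ n, X ^ n ∣ s (n + 1) - s n) :
    ∃ φ : R⟦X⟧, ∀ n, X ^ n ∣ φ - s n := by
  refine ⟨mk fun k => coeff k (s (k + 1)), fun n => X_pow_dvd_iff.mpr fun k hk => ?_⟩
  have := X_pow_dvd_iff.mp (X_pow_dvd_sub_of_le hs hk) k (Nat.lt_succ_self k)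
  rw [map_sub, sub_eq_zero] at this ⊢
  rw [coeff_mk, this]

theorem eq_zero_of_forall_X_pow_dvd {f : R⟦X⟧} (h : ∀ n, X ^ n ∣ f) : f = 0 := by
  ext n
  exact X_pow_dvd_iff.mp (h (n + 1)) n (Nat.lt_succ_self n)

theorem X_pow_succ_dvd_sub_monomial {n : ℕ} {f : R⟦X⟧} (h : X ^ n ∣ f) :
    X ^ (n + 1) ∣ f - C (coeff n f) * X ^ n := by
  obtain ⟨u, rfl⟩ := h
  have hu : X ∣ u - C (constantCoeff u) := X_dvd_iff.mpr (by simp)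
  have hcoeff : coeff n (X ^ n * u) = constantCoeff u := by
    simpa using coeff_X_pow_mul u n 0
  rw [hcoeff, pow_succ, mul_comm (C _), ← mul_sub]
  exact mul_dvd_mul_left _ hu

noncomputable def normalFormDefect (β φ : R⟦X⟧) : R⟦X⟧ :=
  C (coeff 2 β) * φ ^ 2 + C (coeff 3 β) * φ ^ 3 - d⁄dX R φ * β

theorem X_pow_dvd_normalFormDefect_sub {β φ ψ : R⟦X⟧} {n : ℕ} (h : X ^ (n + 1) ∣ φ - ψ) :
    X ^ n ∣ normalFormDefect β φ - normalFormDefect β ψ := by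
  have hsq : φ ^ 2 - ψ ^ 2 = (φ - ψ) * (φ + ψ) := by ring
  have hcube : φ ^ 3 - ψ ^ 3 = (φ - ψ) * (φ ^ 2 + φ * ψ + ψ ^ 2) := by ring
  have hn : X ^ n ∣ φ - ψ := (pow_dvd_pow X n.le_succ).trans h
  have hdiff : normalFormDefect β φ - normalFormDefect β ψ =
      C (coeff 2 β) * (φ ^ 2 - ψ ^ 2) + C (coeff 3 β) * (φ ^ 3 - ψ ^ 3) -
        d⁄dX R (φ - ψ) * β := by
    rw [normalFormDefect, normalFormDefect, map_sub]; ring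
  rw [hdiff, hsq, hcube]
  exact dvd_sub (dvd_add (dvd_mul_of_dvd_right (hn.mul_right _) _)
    (dvd_mul_of_dvd_right (hn.mul_right _) _)) ((X_pow_dvd_derivative h).mul_right _)

theorem X_pow_dvd_normalFormDefect_add_monomial {β φ : R⟦X⟧} (hβ : X ^ 2 ∣ β)
    (hφ : X ^ 2 ∣ φ - X) (c : R) (n : ℕ) :
    X ^ (n + 4) ∣ normalFormDefect β (φ + C c * X ^ (n + 2)) - normalFormDefect β φ +
      C (n * coeff 2 β * c) * X ^ (n + 3) := by
  obtain ⟨v, hv⟩ := hφ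
  obtain ⟨β₁, rfl⟩ := hβ
  obtain ⟨γ, hγ⟩ : X ∣ β₁ - C (constantCoeff β₁) := X_dvd_iff.mpr (by simp)
  rw [sub_eq_iff_eq_add] at hv hγ
  subst hv
  have h2 : coeff 2 (X ^ 2 * β₁) = constantCoeff β₁ := by simpa using coeff_X_pow_mul β₁ 2 0
  have hderiv : d⁄dX R (C c * X ^ (n + 2)) = C c * ((n + 2 : R⟦X⟧) * X ^ (n + 1)) := by
    rw [Derivation.leibniz, derivative_C, derivative_pow, derivative_X, smul_eq_mul]
    push_cast
    ring
  set a := constantCoeff β₁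
  set b := coeff 3 (X ^ 2 * β₁)
  rw [normalFormDefect, normalFormDefect, h2, map_add, hderiv]
  -- At order `n + 3` the contributions `2 a c` of `φ²` and `-(n + 2) a c` of `φ' β` cancel
  -- against `n a c`; everything else is divisible by `X ^ (n + 4)`.
  refine ⟨C a * C c * (2 * v + C c * X ^ n) +
    C b * C c * (3 * (1 + X * v) ^ 2 + 3 * (X + X ^ 2 * v) * C c * X ^ n +
      C c ^ 2 * X ^ (2 * n + 2)) -
    C c * (n + 2 : R⟦X⟧) * γ, ?_⟩
  simp only [map_mul, map_natCast]
  linear_combination (-(C c) * (n + 2) * X ^ (n + 3)) * hγ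

end CommRing

section Field

variable {K : Type*} [Field K]

-- Adding `c X ^ (n + 3)` changes the defect by `-(n + 1) β₂ c` at order `n + 4` and not below
-- (`X_pow_dvd_normalFormDefect_add_monomial`), so `c` is chosen to kill that coefficient.
noncomputable def normalFormApprox (β : K⟦X⟧) : ℕ → K⟦X⟧
  | 0 => X
  | n + 1 => normalFormApprox β n +
      C (coeff (n + 4) (normalFormDefect β (normalFormApprox β n)) / ((n + 1) * coeff 2 β)) *
        X ^ (n + 3)

theorem X_pow_dvd_normalFormApprox_succ_sub (β : K⟦X⟧) (n : ℕ) :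
    X ^ (n + 3) ∣ normalFormApprox β (n + 1) - normalFormApprox β n := by
  rw [normalFormApprox, add_sub_cancel_left]
  exact dvd_mul_left _ _

theorem X_sq_dvd_normalFormApprox_sub_X (β : K⟦X⟧) (n : ℕ) :
    X ^ 2 ∣ normalFormApprox β n - X := by
  induction n with
  | zero => simp [normalFormApprox]
  | succ n ih =>
    rw [← sub_add_sub_cancel]
    exact dvd_add ((pow_dvd_pow X (by omega)).trans
      (X_pow_dvd_normalFormApprox_succ_sub β n)) ih

theorem X_pow_dvd_normalFormDefect_X {β : K⟦X⟧} (hβ : X ^ 2 ∣ β) :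
    X ^ 4 ∣ normalFormDefect β X := by
  rw [X_pow_dvd_iff] at hβ ⊢
  intro k hk
  simp only [normalFormDefect, derivative_X, one_mul, map_sub, map_add, coeff_C_mul,
    coeff_X_pow]
  interval_cases k <;> simp [hβ]

theorem X_pow_dvd_normalFormDefect_normalFormApprox [CharZero K] {β : K⟦X⟧} (hβ : X ^ 2 ∣ β)
    (h2 : coeff 2 β ≠ 0) (n : ℕ) :
    X ^ (n + 4) ∣ normalFormDefect β (normalFormApprox β n) := by
  induction n with
  | zero => exact X_pow_dvd_normalFormDefect_X hβ
  | succ n ih =>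
    set φ := normalFormApprox β n
    set e := coeff (n + 4) (normalFormDefect β φ)
    have hstep := X_pow_dvd_normalFormDefect_add_monomial hβ
      (X_sq_dvd_normalFormApprox_sub_X β n) (e / ((n + 1) * coeff 2 β)) (n + 1)
    have hcancel : ((n + 1 : ℕ) : K) * coeff 2 β * (e / ((n + 1) * coeff 2 β)) = e := by
      push_cast
      field_simp
    rw [hcancel] at hstep
    convert dvd_add hstep (X_pow_succ_dvd_sub_monomial ih) using 1
    rw [normalFormApprox]
    ring

theorem exists_normalFormDefect_eq_zero [CharZero K] {β : K⟦X⟧} (hβ : X ^ 2 ∣ β)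
    (h2 : coeff 2 β ≠ 0) :
    ∃ φ : K⟦X⟧, coeff 0 φ = 0 ∧ coeff 1 φ = 1 ∧ normalFormDefect β φ = 0 := by
  obtain ⟨φ, hφ⟩ := exists_X_pow_dvd_sub fun n =>
    (pow_dvd_pow X (by omega)).trans (X_pow_dvd_normalFormApprox_succ_sub β n)
  have hφX : X ^ 2 ∣ φ - X := by
    rw [← sub_add_sub_cancel]
    exact dvd_add (hφ 2) (X_sq_dvd_normalFormApprox_sub_X β 2)
  have hcoeff := X_pow_dvd_iff.mp hφX
  refine ⟨φ, by simpa using hcoeff 0 two_pos, by simpa [sub_eq_zero] using hcoeff 1 one_lt_two,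
    eq_zero_of_forall_X_pow_dvd fun n => ?_⟩
  rw [← sub_add_cancel (normalFormDefect β φ) (normalFormDefect β (normalFormApprox β (n + 1)))]
  exact dvd_add (X_pow_dvd_normalFormDefect_sub (hφ (n + 1)))
    ((pow_dvd_pow X (by omega)).trans (X_pow_dvd_normalFormDefect_normalFormApprox hβ h2 _))

end Field

theorem comp_C_mul_X_sq_add_C_mul_X_cube (a b : ℝ) {φ : ℝ⟦X⟧} (hφ : coeff 0 φ = 0) :
    comp (C a * X ^ 2 + C b * X ^ 3) φ = C a * φ ^ 2 + C b * φ ^ 3 := by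
  have hpow (k n : ℕ) (h : ¬k < n + 1) : coeff n (φ ^ k) = 0 :=
    X_pow_dvd_iff.mp (pow_dvd_pow_of_dvd (X_dvd_iff.mpr (by simpa using hφ)) k) n (by omega)
  ext n
  simp only [comp, coeff_mk, map_add, coeff_C_mul, coeff_X_pow, mul_ite, mul_one, mul_zero,
    add_mul, ite_mul, zero_mul, Finset.sum_add_distrib, Finset.sum_ite_eq', Finset.mem_range]
  split_ifs <;> simp [*]

/-- Given a formal power series `β(g) = β₂g² + β₃g³ + O(g⁴)` with `β₂ ≠ 0`,
there exists a formal diffeomorphism `φ(g) = g + O(g²)` such that the pushed-forward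
vector field `β̂ = φ_*β`, characterized by `β̂(φ(g)) = φ'(g)·β(g)`, is exactly
`β̂(g) = β₂g² + β₃g³`, i.e. `β̂_r = 0` for all `r ≥ 4`: only `β₂` and `β₃` are universal. -/
theorem beta_function_normal_form
    (β : PowerSeries ℝ)
    (h0 : PowerSeries.coeff 0 β = 0)
    (h1 : PowerSeries.coeff 1 β = 0)
    (h2 : PowerSeries.coeff 2 β ≠ 0) :
    ∃ φ : PowerSeries ℝ,
      PowerSeries.coeff 0 φ = 0 ∧
      PowerSeries.coeff 1 φ = 1 ∧
      comp (PowerSeries.C (PowerSeries.coeff 2 β) * PowerSeries.X ^ 2 +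
            PowerSeries.C (PowerSeries.coeff 3 β) * PowerSeries.X ^ 3) φ =
        (PowerSeries.derivative ℝ φ) * β := by
  have hβ : X ^ 2 ∣ β := X_pow_dvd_iff.mpr fun k hk => by interval_cases k <;> assumption
  obtain ⟨φ, hφ0, hφ1, hφ⟩ := exists_normalFormDefect_eq_zero hβ h2
  refine ⟨φ, hφ0, hφ1, ?_⟩
  rw [comp_C_mul_X_sq_add_C_mul_X_cube _ _ hφ0, ← sub_eq_zero]
  exact hφ

end BetaNormalForm
end

section
/- If a smooth function C : M₂ → ℂ satisfies the dilation covariance C(λx₁, λx₂) = λ^{−Δ₁−Δ₂+Δ₃} C(x₁,x₂) for all λ > 0, translation invariance C(x₁+a, x₂+a) = C(x₁,x₂), and rotation invariance, then C(x₁,x₂) = c·|x₁−x₂|^{−Δ₁−Δ₂+Δ₃} for some constant c ∈ ℂ. -/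
open Submodule FiniteDimensional

-- det of a hyperplane reflection is -1
lemma det_hyperplane_reflection {d : ℕ} (v : EuclideanSpace ℝ (Fin d)) (hv : v ≠ 0) :
    LinearMap.det ((reflection (ℝ ∙ v)ᗮ).toLinearEquiv :
      EuclideanSpace ℝ (Fin d) →ₗ[ℝ] EuclideanSpace ℝ (Fin d)) = -1 := by
  have h1 : ((ℝ ∙ v)ᗮ)ᗮ = ℝ ∙ v := Submodule.orthogonal_orthogonal _
  have := det_reflection (𝕜 := ℝ) ((ℝ ∙ v)ᗮ)
  rw [h1, finrank_span_singleton hv] at this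
  simpa using this

-- existence of a positive-determinant isometry sending e to u (both unit), d ≥ 2
lemma exists_rotation {d : ℕ} (hd : 2 ≤ d) (e u : EuclideanSpace ℝ (Fin d))
    (he : ‖e‖ = 1) (hu : ‖u‖ = 1) :
    ∃ r : EuclideanSpace ℝ (Fin d) ≃ₗᵢ[ℝ] EuclideanSpace ℝ (Fin d),
      0 < LinearMap.det (r.toLinearEquiv :
        EuclideanSpace ℝ (Fin d) →ₗ[ℝ] EuclideanSpace ℝ (Fin d)) ∧ r e = u := by
  -- find w ≠ 0 orthogonal to u
  have hune : u ≠ 0 := by intro h; rw [h, norm_zero] at hu; norm_num at hu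
  have hfr : Module.finrank ℝ (EuclideanSpace ℝ (Fin d)) = d := by simp
  have horth : (ℝ ∙ u)ᗮ ≠ ⊥ := by
    intro h
    have := Submodule.finrank_add_finrank_orthogonal (K := ℝ ∙ u)
    rw [h, finrank_span_singleton hune, finrank_bot, hfr] at this
    omega
  obtain ⟨w, hwmem, hw0⟩ := Submodule.exists_mem_ne_zero_of_ne_bot horth
  by_cases heu : e = u
  · refine ⟨LinearIsometryEquiv.refl ℝ _, ?_, by simp [heu]⟩
    have h : (((LinearIsometryEquiv.refl ℝ (EuclideanSpace ℝ (Fin d))).toLinearEquiv :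
        EuclideanSpace ℝ (Fin d) →ₗ[ℝ] EuclideanSpace ℝ (Fin d))) = LinearMap.id := rfl
    rw [h, LinearMap.det_id]; norm_num
  · have hvne : e - u ≠ 0 := sub_ne_zero.mpr heu
    set r₁ := reflection (ℝ ∙ (e - u))ᗮ
    set r₂ := reflection (ℝ ∙ w)ᗮ
    refine ⟨r₁.trans r₂, ?_, ?_⟩
    · have hc : ((r₁.trans r₂).toLinearEquiv :
          EuclideanSpace ℝ (Fin d) →ₗ[ℝ] EuclideanSpace ℝ (Fin d))
          = (r₂.toLinearEquiv : EuclideanSpace ℝ (Fin d) →ₗ[ℝ] EuclideanSpace ℝ (Fin d)) ∘ₗ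
            (r₁.toLinearEquiv : EuclideanSpace ℝ (Fin d) →ₗ[ℝ] EuclideanSpace ℝ (Fin d)) := by
        rfl
      rw [hc, LinearMap.det_comp, det_hyperplane_reflection _ hw0,
        det_hyperplane_reflection _ hvne]
      norm_num
    · have h1 : r₁ e = u := reflection_sub (by rw [he, hu])
      have hum : u ∈ (ℝ ∙ w)ᗮ := by
        rw [Submodule.mem_orthogonal_singleton_iff_inner_right]
        have h0 : inner ℝ u w = (0:ℝ) :=
          (Submodule.mem_orthogonal _ w).mp hwmem u (Submodule.mem_span_singleton_self u)
        rw [real_inner_comm]; exact h0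
      have h2 : r₂ u = u := reflection_mem_subspace_eq_self hum
      simp [LinearIsometryEquiv.trans_apply, h1, h2]

/-- A smooth function `C` on `M₂ = {(x₁,x₂) ∈ ℝ^d × ℝ^d : x₁ ≠ x₂}` that is
translation invariant, rotation invariant (under `SO(d)`), and dilation covariant with
weight `−Δ₁−Δ₂+Δ₃` must be of the form `C(x₁,x₂) = c·|x₁−x₂|^{−Δ₁−Δ₂+Δ₃}`. -/
theorem scalar_two_point_coefficient_form
    (d : ℕ) (hd : 2 ≤ d) (Δ₁ Δ₂ Δ₃ : ℝ)
    (C : EuclideanSpace ℝ (Fin d) → EuclideanSpace ℝ (Fin d) → ℂ)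
    (hsmooth : ContDiffOn ℝ (⊤ : ℕ∞) (fun p : EuclideanSpace ℝ (Fin d) × EuclideanSpace ℝ (Fin d) =>
      C p.1 p.2) {p | p.1 ≠ p.2})
    (htrans : ∀ a x₁ x₂, C (x₁ + a) (x₂ + a) = C x₁ x₂)
    (hrot : ∀ r : EuclideanSpace ℝ (Fin d) ≃ₗᵢ[ℝ] EuclideanSpace ℝ (Fin d),
      0 < LinearMap.det (r.toLinearEquiv : EuclideanSpace ℝ (Fin d) →ₗ[ℝ] EuclideanSpace ℝ (Fin d)) →
      ∀ x₁ x₂, C (r x₁) (r x₂) = C x₁ x₂)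
    (hscale : ∀ lam : ℝ, 0 < lam → ∀ x₁ x₂,
      C (lam • x₁) (lam • x₂) = ((lam ^ (-Δ₁ - Δ₂ + Δ₃) : ℝ) : ℂ) * C x₁ x₂) :
    ∃ c : ℂ, ∀ x₁ x₂, x₁ ≠ x₂ →
      C x₁ x₂ = c * ((‖x₁ - x₂‖ ^ (-Δ₁ - Δ₂ + Δ₃) : ℝ) : ℂ) := by
  have hd0 : 0 < d := by omega
  set e : EuclideanSpace ℝ (Fin d) := EuclideanSpace.single ⟨0, hd0⟩ (1:ℝ) with he_def
  have he : ‖e‖ = 1 := by simp [he_def]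
  refine ⟨C e 0, fun x₁ x₂ hne => ?_⟩
  set v : EuclideanSpace ℝ (Fin d) := x₁ - x₂ with hv_def
  have hvne : v ≠ 0 := sub_ne_zero.mpr hne
  have hlam : (0:ℝ) < ‖v‖ := norm_pos_iff.mpr hvne
  set u : EuclideanSpace ℝ (Fin d) := ‖v‖⁻¹ • v with hu_def
  have hu : ‖u‖ = 1 := by
    rw [hu_def, norm_smul, norm_inv, norm_norm, inv_mul_cancel₀ hlam.ne']
  -- translation: C x₁ x₂ = C v 0
  have h1 : C x₁ x₂ = C v 0 := by
    have := htrans x₂ v 0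
    rw [zero_add] at this
    rw [← this, hv_def, sub_add_cancel]
  -- scaling: C v 0 = ‖v‖^α * C u 0
  have h2 : C v 0 = ((‖v‖ ^ (-Δ₁ - Δ₂ + Δ₃) : ℝ) : ℂ) * C u 0 := by
    have := hscale ‖v‖ hlam u 0
    rw [smul_zero] at this
    rw [← this, hu_def, smul_smul, mul_inv_cancel₀ hlam.ne', one_smul]
  -- rotation: C u 0 = C e 0
  obtain ⟨r, hrdet, hre⟩ := exists_rotation hd e u he hu
  have h3 : C u 0 = C e 0 := by
    have := hrot r hrdet e 0
    rw [map_zero, hre] at this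
    exact this
  rw [h1, h2, h3, mul_comm]
end
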